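/- Applying the semi-relativistic boost Λ_sr(u) to the electromagnetic field tensor F = [[0, -Eᵀ/c], [E/c, W(B)]] via F' = Λ_sr F Λ_srᵀ yields, exactly, a tensor of the same form with electric field E + u×B - (u·E/c²)u and magnetic field B - u×E/c² plus a symmetric correction; in particular, the (0,i) block of F' equals (E + u×B)/c - (u·E)u/c³. -/

import Mathlib

open Matrix

/-- The semi-relativistic boost `Λ_sr(u) = [[1, -uᵀ/c], [-u/c, I]]`. -/
noncomputable def boostSR (c : ℝ) (u : Fin 3 → ℝ) :
    Matrix (Fin 1 ⊕ Fin 3) (Fin 1 ⊕ Fin 3) ℝ :=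
  Matrix.fromBlocks 1 (Matrix.of fun _ j => -(u j / c)) (Matrix.of fun i _ => -(u i / c)) 1

/-- The cross-product matrix with skew axis `a`. -/
def wmat (a : Fin 3 → ℝ) : Matrix (Fin 3) (Fin 3) ℝ :=
  !![0, -a 2, a 1; a 2, 0, -a 0; -a 1, a 0, 0]

/-- The electromagnetic field tensor `F = [[0, -Eᵀ/c], [E/c, W(B)]]`. -/
noncomputable def emTensor (c : ℝ) (E B : Fin 3 → ℝ) :
    Matrix (Fin 1 ⊕ Fin 3) (Fin 1 ⊕ Fin 3) ℝ :=
  Matrix.fromBlocks 0 (Matrix.of fun _ j => -(E j / c)) (Matrix.of fun i _ => E i / c) (wmat B)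

theorem wmat_mulVec (a b : Fin 3 → ℝ) : wmat a *ᵥ b = a ⨯₃ b := by
  ext i
  fin_cases i <;> simp [wmat, cross_apply, mulVec, dotProduct, Fin.sum_univ_three] <;> ring

section BlockComputation

variable {R n : Type*} [CommRing R] [Fintype n] [DecidableEq n]

def boostMatrix (v : n → R) : Matrix (Fin 1 ⊕ n) (Fin 1 ⊕ n) R :=
  fromBlocks 1 (of fun _ j => -v j) (of fun i _ => -v i) 1

def fieldTensor (e : n → R) (W : Matrix n n R) : Matrix (Fin 1 ⊕ n) (Fin 1 ⊕ n) R :=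
  fromBlocks 0 (of fun _ j => -e j) (of fun i _ => e i) W

theorem boostMatrix_mul_fieldTensor_mul_transpose_inr_inl (v e : n → R) (W : Matrix n n R)
    (i : n) :
    (boostMatrix v * fieldTensor e W * (boostMatrix v)ᵀ) (Sum.inr i) (Sum.inl 0) =
      e i - (v ⬝ᵥ e) * v i - (W *ᵥ v) i := by
  have hv : ∑ j, v i * e j * v j = ∑ j, v j * e j * v i :=
    Finset.sum_congr rfl fun _ _ => by ring
  simp [boostMatrix, fieldTensor, fromBlocks_multiply, fromBlocks_transpose, mul_apply, add_mul,
    Finset.sum_add_distrib, mulVec, dotProduct, Finset.sum_mul, hv]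
  ring

end BlockComputation

theorem boosted_emTensor_electric_block_general (c : ℝ) (u E B : Fin 3 → ℝ) :
    ∀ i : Fin 3,
      (boostSR c u * emTensor c E B * (boostSR c u)ᵀ) (Sum.inr i) (Sum.inl 0)
        = (E + u ⨯₃ B) i / c - (u ⬝ᵥ E) * u i / c ^ 3 := by
  intro i
  have hu : (fun j => u j / c) = c⁻¹ • u := funext fun j => div_eq_inv_mul (u j) c
  have hE : (fun j => E j / c) = c⁻¹ • E := funext fun j => div_eq_inv_mul (E j) c
  have hΛ : boostSR c u = boostMatrix (c⁻¹ • u) := hu ▸ rfl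
  have hF : emTensor c E B = fieldTensor (c⁻¹ • E) (wmat B) := hE ▸ rfl
  rw [hΛ, hF, boostMatrix_mul_fieldTensor_mul_transpose_inr_inl, wmat_mulVec, smul_dotProduct,
    dotProduct_smul, map_smul, ← cross_anticomm u B]
  simp only [Pi.smul_apply, Pi.add_apply, Pi.neg_apply, smul_eq_mul]
  ring

/-- Exact computation of the electric block of the boosted field tensor
`F' = Λ_sr F Λ_srᵀ`: the transformed electric field is
`E + u×B - (u·E/c²)u`, i.e. the electric block of `F'` equals
`(E + u×B)/c - (u·E)u/c³`. -/
theorem boosted_emTensor_electric_block (c : ℝ) (hc : 0 < c) (u E B : Fin 3 → ℝ) :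
    ∀ i : Fin 3,
      (boostSR c u * emTensor c E B * (boostSR c u)ᵀ) (Sum.inr i) (Sum.inl 0)
        = (E + u ⨯₃ B) i / c - (u ⬝ᵥ E) * u i / c ^ 3 :=
  boosted_emTensor_electric_block_general c u E B
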